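/- arXiv:0911.0086 — 4 statements merged into one kernel-verified Lean document; each statement's English description precedes it below -/
import Mathlib

section
/- Define f : [0,1] → ℝ by f(λ) = √(1-λ) + √λ/2 if λ ≤ 1/2, and f(λ) = 1/(2√λ) + √λ/2 if λ > 1/2. Then f(λ) ≥ 1 for all λ ∈ [0,1]. -/
/-! With `a = √(1 - λ)` and `b = √λ` we have `a² + b² = 1`. For `λ ≤ 1/2` also `b ≤ a`, so
`(a + b/2)² = a² + ab + b²/4 ≥ a² + b² = 1`. For `λ > 1/2` the claim is AM-GM for `s = √λ`:
`1/(2s) + s/2 - 1 = (s - 1)² / (2s) ≥ 0`. -/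

noncomputable def f (l : ℝ) : ℝ :=
  if l ≤ 1 / 2 then Real.sqrt (1 - l) + Real.sqrt l / 2
  else 1 / (2 * Real.sqrt l) + Real.sqrt l / 2

lemma one_le_add_half_of_sq_add_sq_eq_one {a b : ℝ} (hb : 0 ≤ b) (hba : b ≤ a)
    (hab : a ^ 2 + b ^ 2 = 1) : 1 ≤ a + b / 2 := by
  have hsq : 1 ≤ (a + b / 2) ^ 2 := by nlinarith [mul_le_mul_of_nonneg_left hba hb]
  nlinarith

lemma one_le_sqrt_one_sub_add_sqrt_div_two {l : ℝ} (h0 : 0 ≤ l) (hl : l ≤ 1 / 2) :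
    1 ≤ √(1 - l) + √l / 2 := by
  refine one_le_add_half_of_sq_add_sq_eq_one (Real.sqrt_nonneg l)
    (Real.sqrt_le_sqrt (by linarith)) ?_
  rw [Real.sq_sqrt (by linarith), Real.sq_sqrt h0]
  ring

lemma one_le_inv_two_mul_add_div_two {s : ℝ} (hs : 0 < s) : 1 ≤ 1 / (2 * s) + s / 2 := by
  have key : 1 / (2 * s) + s / 2 - 1 = (s - 1) ^ 2 / (2 * s) := by
    field_simp
    ring
  have : 0 ≤ (s - 1) ^ 2 / (2 * s) := by positivity
  linarith

theorem f_ge_one : ∀ l ∈ Set.Icc (0 : ℝ) 1, 1 ≤ f l := by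
  rintro l ⟨h0, -⟩
  unfold f
  split_ifs with hl
  · exact one_le_sqrt_one_sub_add_sqrt_div_two h0 hl
  · exact one_le_inv_two_mul_add_div_two (Real.sqrt_pos.mpr (by linarith))
end

section
/- Let P be a finite poset on V with |V| = n. The order polytope O(P) = {x ∈ [0,1]^V : x_v ≤ x_w whenever v ≤_P w} has volume e(P)/n!, where e(P) is the number of linear extensions of P. -/
/-!
Outside the null set of points with a repeated coordinate, every point of the unit cube `[0,1]^V`
is sorted by exactly one bijection `σ : V ≃ Fin n`, so the cube is almost a disjoint union of the
`n!` simplices `{x | x ∘ σ⁻¹ monotone}`. These are congruent under permutations of coordinates,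
hence each has volume `1/n!`. A point with distinct coordinates lies in `O(P)` exactly when its
sorting bijection is a linear extension of `P`, so `O(P)` is almost the union of `e(P)` of them.
-/

open Finset MeasureTheory

/-- The number of linear extensions of a finite poset, counted as order-preserving
bijections to `Fin n`. -/
noncomputable def numLinExt (V : Type*) [Fintype V] [PartialOrder V] : ℕ :=
  Nat.card {σ : V ≃ Fin (Fintype.card V) // ∀ x y : V, x ≤ y → σ x ≤ σ y}

/-- The order polytope of a poset. -/
def orderPolytope (V : Type*) [PartialOrder V] : Set (V → ℝ) :=
  {x | (∀ v, x v ∈ Set.Icc (0 : ℝ) 1) ∧ ∀ v w : V, v ≤ w → x v ≤ x w}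

theorem orderPolytope_eq (V : Type*) [PartialOrder V] :
    orderPolytope V = Set.Icc 0 1 ∩ {x | Monotone x} := by
  ext x
  simp [orderPolytope, Pi.le_def, Monotone, forall_and]

theorem measurableSet_orderPolytope (V : Type*) [PartialOrder V] [Countable V] :
    MeasurableSet (orderPolytope V) := by
  rw [orderPolytope_eq]
  exact (isClosed_Icc.inter isClosed_monotone).measurableSet

section Sorting

variable {V α : Type*} [LinearOrder α] {n : ℕ}

theorem exists_monotone_comp_symm (e : V ≃ Fin n) (x : V → α) :
    ∃ σ : V ≃ Fin n, Monotone (x ∘ σ.symm) :=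
  ⟨e.trans (Tuple.sort (x ∘ e.symm)).symm, Tuple.monotone_sort (x ∘ e.symm)⟩

theorem eq_of_monotone_comp_symm {x : V → α} (hx : Function.Injective x) {σ τ : V ≃ Fin n}
    (hσ : Monotone (x ∘ σ.symm)) (hτ : Monotone (x ∘ τ.symm)) : σ = τ := by
  have hσ_strict := hσ.strictMono_of_injective (hx.comp σ.symm.injective)
  have hτ_strict := hτ.strictMono_of_injective (hx.comp τ.symm.injective)
  have hcomp : x ∘ σ.symm = x ∘ τ.symm := by
    rw [← hσ_strict.range_inj hτ_strict, Set.range_comp, Set.range_comp, σ.symm.range_eq_univ,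
      τ.symm.range_eq_univ]
  exact Equiv.symm_bijective.injective (Equiv.ext fun i => hx (congrFun hcomp i))

end Sorting

theorem volume_setOf_apply_eq_apply {ι : Type*} [Fintype ι] {i j : ι} (h : i ≠ j) :
    volume {x : ι → ℝ | x i = x j} = 0 := by
  classical
  let f : (ι → ℝ) →ₗ[ℝ] ℝ := (LinearMap.proj i : (ι → ℝ) →ₗ[ℝ] ℝ) - LinearMap.proj j
  have hf : f ≠ 0 := fun hf => by
    simpa [f, Pi.single_apply, h.symm] using LinearMap.congr_fun hf (Pi.single i 1)
  have hker : {x : ι → ℝ | x i = x j} = LinearMap.ker f := by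
    ext x
    simp [f, sub_eq_zero]
  rw [hker]
  exact Measure.addHaar_submodule _ _ (LinearMap.ker_eq_top.not.2 hf)

theorem ae_injective (ι : Type*) [Fintype ι] :
    ∀ᵐ x : ι → ℝ, Function.Injective x := by
  refine ae_all_iff.2 fun i => ae_all_iff.2 fun j => ?_
  by_cases h : i = j
  · exact Filter.Eventually.of_forall fun _ _ => h
  · exact (measure_eq_zero_iff_ae_notMem.1 (volume_setOf_apply_eq_apply h)).mono
      fun x hx hij => absurd hij hx

section Simplex

variable {V : Type*} {n : ℕ}

/-- The simplex `{x ∈ [0,1]^V | x (σ⁻¹ 0) ≤ x (σ⁻¹ 1) ≤ ⋯}`. -/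
def sortedSimplex (σ : V ≃ Fin n) : Set (V → ℝ) :=
  (fun x => x ∘ σ.symm) ⁻¹' orderPolytope (Fin n)

theorem mem_sortedSimplex {σ : V ≃ Fin n} {x : V → ℝ} :
    x ∈ sortedSimplex σ ↔ x ∈ Set.Icc 0 1 ∧ Monotone (x ∘ σ.symm) := by
  simp [sortedSimplex, orderPolytope_eq, Pi.le_def, σ.symm.forall_congr_left]

theorem measurableSet_sortedSimplex (σ : V ≃ Fin n) : MeasurableSet (sortedSimplex σ) :=
  (measurableSet_orderPolytope (Fin n)).preimage
    (MeasurableEquiv.arrowCongr' σ (MeasurableEquiv.refl ℝ)).measurable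

variable [Fintype V]

theorem volume_sortedSimplex (σ : V ≃ Fin n) :
    volume (sortedSimplex σ) = volume (orderPolytope (Fin n)) :=
  (volume_preserving_arrowCongr' σ (MeasurableEquiv.refl ℝ) (.id volume)).measure_preimage
    (measurableSet_orderPolytope (Fin n)).nullMeasurableSet

theorem aedisjoint_sortedSimplex {σ τ : V ≃ Fin n} (h : σ ≠ τ) :
    AEDisjoint volume (sortedSimplex σ) (sortedSimplex τ) := by
  have hnull : volume {x : V → ℝ | ¬ Function.Injective x} = 0 := ae_iff.1 (ae_injective V)
  refine measure_mono_null ?_ hnull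
  intro x hx hinj
  apply h
  exact eq_of_monotone_comp_symm hinj (mem_sortedSimplex.1 hx.1).2 (mem_sortedSimplex.1 hx.2).2

theorem volume_biUnion_sortedSimplex (s : Set (V ≃ Fin n)) :
    volume (⋃ σ ∈ s, sortedSimplex σ) = Nat.card s * volume (orderPolytope (Fin n)) := by
  rw [measure_biUnion₀ s.toFinite.countable
    (fun σ _ τ _ h => aedisjoint_sortedSimplex h)
    (fun σ _ => (measurableSet_sortedSimplex σ).nullMeasurableSet)]
  simp only [volume_sortedSimplex, ENNReal.tsum_const, ENat.card_eq_coe_natCard,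
    ENat.toENNReal_coe]

end Simplex

theorem volume_orderPolytope_fin (n : ℕ) :
    volume (orderPolytope (Fin n)) = (n.factorial : ENNReal)⁻¹ := by
  have hcover : ⋃ σ ∈ (Set.univ : Set (Fin n ≃ Fin n)), sortedSimplex σ = Set.Icc 0 1 := by
    ext x
    simp only [Set.mem_iUnion, Set.mem_univ, exists_const, mem_sortedSimplex]
    refine ⟨fun ⟨_, hx, _⟩ => hx, fun hx => ?_⟩
    obtain ⟨σ, hσ⟩ := exists_monotone_comp_symm (Equiv.refl _) x
    exact ⟨σ, hx, hσ⟩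
  have h := volume_biUnion_sortedSimplex (Set.univ : Set (Fin n ≃ Fin n))
  rw [hcover, Real.volume_Icc_pi, Nat.card_univ, Nat.card_eq_fintype_card,
    Fintype.card_equiv (Equiv.refl _)] at h
  simp only [Pi.one_apply, Pi.zero_apply, sub_zero, ENNReal.ofReal_one, prod_const_one,
    Fintype.card_fin] at h
  exact ENNReal.eq_inv_of_mul_eq_one_left (by rw [mul_comm, ← h])

theorem mem_orderPolytope_iff_exists_sortedSimplex {V : Type*} [Fintype V] [PartialOrder V]
    {x : V → ℝ} (hx : Function.Injective x) :
    x ∈ orderPolytope V ↔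
      ∃ σ : V ≃ Fin (Fintype.card V), Monotone σ ∧ x ∈ sortedSimplex σ := by
  simp only [orderPolytope_eq, mem_sortedSimplex, Set.mem_inter_iff, Set.mem_ofPred_eq]
  constructor
  · rintro ⟨hcube, hmono⟩
    obtain ⟨σ, hσ⟩ := exists_monotone_comp_symm (Fintype.equivFin V) x
    have hσ_strict := hσ.strictMono_of_injective (hx.comp σ.symm.injective)
    exact ⟨σ, fun v w hvw => hσ_strict.le_iff_le.1 (by simpa using hmono hvw), hcube, hσ⟩
  · rintro ⟨σ, hσ, hcube, hxσ⟩
    have hx_eq : x = (x ∘ σ.symm) ∘ σ := by ext; simp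
    exact ⟨hcube, hx_eq ▸ hxσ.comp hσ⟩

theorem orderPolytope_ae_eq_biUnion (V : Type*) [Fintype V] [PartialOrder V] :
    orderPolytope V =ᵐ[volume]
      ⋃ σ ∈ {σ : V ≃ Fin (Fintype.card V) | Monotone σ}, sortedSimplex σ := by
  refine Filter.eventuallyEq_set.2 ?_
  filter_upwards [ae_injective V] with x hx
  simp only [mem_orderPolytope_iff_exists_sortedSimplex hx, Set.mem_iUnion, exists_prop]

/-- Stanley: the volume of the order polytope of a finite poset `P` of order `n`
is `e(P)/n!`. -/
theorem volume_orderPolytope {V : Type*} [Fintype V] [PartialOrder V] :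
    volume (orderPolytope V) =
      (numLinExt V : ENNReal) / (Nat.factorial (Fintype.card V) : ENNReal) := by
  rw [measure_congr (orderPolytope_ae_eq_biUnion V), volume_biUnion_sortedSimplex,
    volume_orderPolytope_fin, div_eq_mul_inv, numLinExt]
  rfl
end

section
/- For positive integers m ≥ k, k·(1 + ⌊log₂(m/k)⌋) + ⌊m / 2^⌊log₂(m/k)⌋⌋ - 1 ≤ k · log₂(4m/k). -/
/-- The Hwang–Lin merging comparison bound: for positive integers `m ≥ k`,
`k·(1 + ⌊log₂(m/k)⌋) + ⌊m / 2^⌊log₂(m/k)⌋⌋ - 1 ≤ k·log₂(4m/k)`. -/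
theorem hwang_lin_bound (m k : ℕ) (hk : 0 < k) (hkm : k ≤ m) :
    (k : ℝ) * (1 + (⌊Real.logb 2 ((m : ℝ) / (k : ℝ))⌋ : ℝ)) +
        (⌊(m : ℝ) / (2 : ℝ) ^ (⌊Real.logb 2 ((m : ℝ) / (k : ℝ))⌋ : ℤ)⌋ : ℝ) - 1 ≤
      (k : ℝ) * Real.logb 2 (4 * (m : ℝ) / (k : ℝ)) := by
  have hk' : (0 : ℝ) < k := by exact_mod_cast hk
  have hm' : (0 : ℝ) < m := lt_of_lt_of_le hk' (by exact_mod_cast hkm)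
  have hq : (0 : ℝ) < (m : ℝ) / k := div_pos hm' hk'
  set L : ℝ := Real.logb 2 ((m : ℝ) / k) with hL
  set t : ℤ := ⌊L⌋ with ht
  set ξ : ℝ := L - t with hξ
  have hξ0 : 0 ≤ ξ := sub_nonneg.2 (Int.floor_le L)
  have hξ1 : ξ ≤ 1 := by
    have := Int.lt_floor_add_one L
    simp only [hξ]; linarith
  -- m / 2^t = k * 2^ξ
  have h2 : (1:ℝ) < 2 := one_lt_two
  have hrw : (m : ℝ) / (2 : ℝ) ^ t = (k : ℝ) * (2 : ℝ) ^ ξ := by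
    have hmk : (m : ℝ) = k * (2 : ℝ) ^ L := by
      rw [hL, Real.rpow_logb two_pos (by norm_num) hq]
      field_simp
    rw [hmk, hξ, Real.rpow_sub two_pos, mul_div_assoc, Real.rpow_intCast]
  -- 2^ξ ≤ 1 + ξ
  have hbern : (2 : ℝ) ^ ξ ≤ 1 + ξ := by
    have := rpow_one_add_le_one_add_mul_self (s := 1) (by norm_num) hξ0 hξ1
    norm_num at this
    linarith [this]
  have hfloor : (⌊(m : ℝ) / (2 : ℝ) ^ t⌋ : ℝ) ≤ (k : ℝ) * (2 : ℝ) ^ ξ := by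
    rw [← hrw]; exact Int.floor_le _
  have hlog4 : Real.logb 2 (4 * (m : ℝ) / k) = 2 + L := by
    rw [mul_div_assoc, Real.logb_mul (by norm_num) (ne_of_gt hq)]
    have : Real.logb 2 (4:ℝ) = 2 := by
      rw [show (4:ℝ) = 2 ^ (2:ℕ) by norm_num, Real.logb_pow, Real.logb_self_eq_one] <;> norm_num
    rw [this]
  rw [hlog4]
  have : L = t + ξ := by simp [hξ]
  nlinarith [hfloor, mul_le_mul_of_nonneg_left hbern (le_of_lt hk')]
end

section
/- Let G be a finite bipartite graph with parts A and B, and let D be the network obtained by directing all edges from A to B with infinite capacity, adding a source s with edges (s,u) of capacity α for each u ∈ A, and a sink t with edges (v,t) of capacity β for each v ∈ B, where α, β are positive integers. Then there exists a nonempty subset X ⊆ A with |X|/|N(X)| > β/α (where N(X) is the neighborhood of X in G, and the ratio is interpreted as ∞ if N(X) = ∅ and X ≠ ∅) if and only if the minimum capacity of an s–t cut in D is strictly less than α·|A|. -/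
open Finset

variable {V : Type*} [Fintype V] [DecidableEq V]

/-- The capacity function of the network `D` built from a bipartite graph `G` with
parts `A`, `B`: a source (`Sum.inl ()`) sends capacity-`α` edges to `A`, the edges of
`G` are directed from `A` to `B` with infinite capacity, and `B` sends capacity-`β`
edges to the sink (`Sum.inr (Sum.inr ())`). -/
noncomputable def netCap (G : SimpleGraph V) [DecidableRel G.Adj] (A B : Finset V) (α β : ℕ) :
    (Unit ⊕ V ⊕ Unit) → (Unit ⊕ V ⊕ Unit) → ENNReal
  | Sum.inl _, Sum.inr (Sum.inl v) => if v ∈ A then (α : ENNReal) else 0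
  | Sum.inr (Sum.inl u), Sum.inr (Sum.inl v) =>
      if G.Adj u v ∧ u ∈ A ∧ v ∈ B then ⊤ else 0
  | Sum.inr (Sum.inl v), Sum.inr (Sum.inr _) => if v ∈ B then (β : ENNReal) else 0
  | _, _ => 0

/-- The capacity of the cut determined by a set `S` of vertices of the network. -/
noncomputable def cutCap (G : SimpleGraph V) [DecidableRel G.Adj]
    (A B : Finset V) (α β : ℕ) (S : Finset (Unit ⊕ V ⊕ Unit)) : ENNReal :=
  ∑ p, ∑ q, if p ∈ S ∧ q ∉ S then netCap G A B α β p q else 0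

/-!
Every `s`–`t` cut is `{s} ∪ T` for some `T ⊆ V`; its capacity is `α|A \ T| + β|B ∩ T|`,
plus `∞` as soon as an edge of `G` leaves `A ∩ T` for `B \ T`. For `T = X ∪ N(X)` no edge
leaves, and the capacity `α|A| - α|X| + β|N(X)|` is below `α|A|` exactly when
`β|N(X)| < α|X|`. Conversely a cut of capacity below `α|A|` is finite, so `X = A ∩ T` has
`N(X) ⊆ B ∩ T` and `β|N(X)| ≤ β|B ∩ T| < α|A ∩ T|`.
-/

def cutOf (T : Finset V) : Finset (Unit ⊕ V ⊕ Unit) :=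
  univ.filter fun p => p = Sum.inl () ∨ ∃ v ∈ T, p = Sum.inr (Sum.inl v)

@[simp] lemma inl_mem_cutOf (T : Finset V) (u : Unit) : Sum.inl u ∈ cutOf T := by simp [cutOf]

@[simp] lemma inr_inl_mem_cutOf {T : Finset V} {v : V} :
    Sum.inr (Sum.inl v) ∈ cutOf T ↔ v ∈ T := by simp [cutOf]

@[simp] lemma inr_inr_notMem_cutOf (T : Finset V) (u : Unit) :
    Sum.inr (Sum.inr u) ∉ cutOf T := by
  simp [cutOf]

lemma eq_cutOf_filter {S : Finset (Unit ⊕ V ⊕ Unit)} (hs : Sum.inl () ∈ S)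
    (ht : Sum.inr (Sum.inr ()) ∉ S) :
    S = cutOf (univ.filter fun v => Sum.inr (Sum.inl v) ∈ S) := by
  ext (⟨⟩ | v | ⟨⟩) <;> simp [hs, ht]

section
variable (G : SimpleGraph V) [DecidableRel G.Adj] (A B : Finset V) (α β : ℕ)

lemma cutCap_cutOf (T : Finset V) :
    cutCap G A B α β (cutOf T) = ((α * #(A \ T) + β * #(B ∩ T) : ℕ) : ENNReal) +
      ∑ u ∈ A ∩ T, ∑ v ∈ B \ T, if G.Adj u v then ⊤ else 0 := by
  have fromSource (x : V) : (if x ∉ T then if x ∈ A then (α : ENNReal) else 0 else 0) =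
      if x ∈ A \ T then (α : ENNReal) else 0 := by
    by_cases x ∈ T <;> simp [*]
  have toSink (x : V) : (if x ∈ T then if x ∈ B then (β : ENNReal) else 0 else 0) =
      if x ∈ B ∩ T then (β : ENNReal) else 0 := by
    by_cases x ∈ T <;> simp [*]
  have crossing (x y : V) : (if x ∈ T ∧ y ∉ T then
      if G.Adj x y ∧ x ∈ A ∧ y ∈ B then (⊤ : ENNReal) else 0 else 0) =
      if x ∈ A ∩ T then if y ∈ B \ T then if G.Adj x y then ⊤ else 0 else 0 else 0 := by
    by_cases x ∈ T <;> by_cases x ∈ A <;> by_cases y ∈ T <;> by_cases y ∈ B <;> simp [*]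
  simp only [cutCap, Fintype.sum_sum_type, netCap, univ_unique, sum_singleton, inl_mem_cutOf,
    inr_inl_mem_cutOf, inr_inr_notMem_cutOf, true_and, and_true, not_true_eq_false, and_false,
    not_false_eq_true, ite_self, sum_const_zero, add_zero, zero_add]
  simp only [fromSource, toSink, crossing, ← ite_sum_zero, sum_add_distrib, sum_ite_mem_eq,
    sum_const, nsmul_eq_mul]
  push_cast
  ring

lemma cutCap_cutOf_eq_top {T : Finset V} {u v : V} (hu : u ∈ A ∩ T) (hv : v ∈ B \ T)
    (huv : G.Adj u v) : cutCap G A B α β (cutOf T) = ⊤ := by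
  rw [cutCap_cutOf, ENNReal.add_eq_top, ENNReal.sum_eq_top]
  exact Or.inr ⟨u, hu, ENNReal.sum_eq_top.2 ⟨v, hv, if_pos huv⟩⟩

lemma cutCap_cutOf_of_closed {T : Finset V}
    (hT : ∀ u ∈ A ∩ T, ∀ v ∈ B, G.Adj u v → v ∈ T) :
    cutCap G A B α β (cutOf T) = ((α * #(A \ T) + β * #(B ∩ T) : ℕ) : ENNReal) := by
  rw [cutCap_cutOf, sum_eq_zero fun u hu => sum_eq_zero fun v hv => if_neg fun huv => ?_,
    add_zero]
  exact (mem_sdiff.1 hv).2 (hT u hu v (mem_sdiff.1 hv).1 huv)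

lemma sInf_cutCap_lt_iff {c : ENNReal} :
    sInf {c : ENNReal | ∃ S : Finset (Unit ⊕ V ⊕ Unit),
        Sum.inl () ∈ S ∧ Sum.inr (Sum.inr ()) ∉ S ∧ c = cutCap G A B α β S} < c ↔
      ∃ T : Finset V, cutCap G A B α β (cutOf T) < c := by
  simp only [sInf_lt_iff, Set.mem_ofPred_eq]
  constructor
  · rintro ⟨_, ⟨S, hs, ht, rfl⟩, hlt⟩
    exact ⟨_, eq_cutOf_filter hs ht ▸ hlt⟩
  · rintro ⟨T, hlt⟩
    exact ⟨_, ⟨cutOf T, inl_mem_cutOf T (), inr_inr_notMem_cutOf T (), rfl⟩, hlt⟩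

def neighborsIn (B X : Finset V) : Finset V := B.filter fun v => ∃ u ∈ X, G.Adj u v

lemma cutCap_cutOf_union_neighborsIn_lt (hdisj : Disjoint A B) {X : Finset V} (hXA : X ⊆ A)
    (hX : β * #(neighborsIn G B X) < α * #X) :
    cutCap G A B α β (cutOf (X ∪ neighborsIn G B X)) < α * #A := by
  set N := neighborsIn G B X
  have hNB : N ⊆ B := filter_subset _ _
  have hA : A ∩ (X ∪ N) = X := by
    rw [inter_union_distrib_left, inter_eq_right.2 hXA,
      disjoint_iff_inter_eq_empty.1 (hdisj.mono_right hNB), union_empty]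
  have hB : B ∩ (X ∪ N) = N := by
    rw [inter_union_distrib_left, inter_eq_right.2 hNB,
      disjoint_iff_inter_eq_empty.1 (hdisj.mono_left hXA).symm, empty_union]
  have hclosed : ∀ u ∈ A ∩ (X ∪ N), ∀ v ∈ B, G.Adj u v → v ∈ X ∪ N := by
    intro u hu v hv huv
    rw [hA] at hu
    exact mem_union_right _ (mem_filter.2 ⟨hv, u, hu, huv⟩)
  rw [cutCap_cutOf_of_closed G A B α β hclosed, hB, sdiff_union_distrib,
    sdiff_eq_self_of_disjoint (hdisj.mono_right hNB), inter_eq_left.2 sdiff_subset]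
  have hcard : #(A \ X) + #X = #A := card_sdiff_add_card_eq_card hXA
  have : α * #(A \ X) + β * #N < α * #A := by rw [← hcard, mul_add]; omega
  exact_mod_cast this

lemma ratio_of_cutCap_cutOf_lt {T : Finset V} (hT : cutCap G A B α β (cutOf T) < α * #A) :
    (A ∩ T).Nonempty ∧ β * #(neighborsIn G B (A ∩ T)) < α * #(A ∩ T) := by
  have hclosed : ∀ u ∈ A ∩ T, ∀ v ∈ B, G.Adj u v → v ∈ T := fun u hu v hv huv => by
    by_contra hvT
    rw [cutCap_cutOf_eq_top G A B α β hu (mem_sdiff.2 ⟨hv, hvT⟩) huv] at hT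
    exact not_top_lt hT
  have hN : neighborsIn G B (A ∩ T) ⊆ B ∩ T := fun v hv => by
    obtain ⟨hvB, u, hu, huv⟩ := mem_filter.1 hv
    exact mem_inter.2 ⟨hvB, hclosed u hu v hvB huv⟩
  rw [cutCap_cutOf_of_closed G A B α β hclosed] at hT
  have hcap : α * #(A \ T) + β * #(B ∩ T) < α * #A := by exact_mod_cast hT
  have hcard : #(A \ T) + #(A ∩ T) = #A := card_sdiff_add_card_inter A T
  have hlt : β * #(neighborsIn G B (A ∩ T)) < α * #(A ∩ T) := by
    have := Nat.mul_le_mul_left β (card_le_card hN)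
    rw [← hcard, mul_add] at hcap
    omega
  refine ⟨card_pos.1 (Nat.pos_of_ne_zero fun h0 => ?_), hlt⟩
  simp [h0] at hlt

end

theorem ratio_iff_mincut_lt_general (G : SimpleGraph V) [DecidableRel G.Adj]
    (A B : Finset V) (hdisj : Disjoint A B)
    (α β : ℕ) :
    (∃ X : Finset V, X ⊆ A ∧ X.Nonempty ∧
        β * (B.filter (fun v => ∃ u ∈ X, G.Adj u v)).card < α * X.card) ↔
      sInf {c : ENNReal | ∃ S : Finset (Unit ⊕ V ⊕ Unit),
          Sum.inl () ∈ S ∧ Sum.inr (Sum.inr ()) ∉ S ∧ c = cutCap G A B α β S} <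
        (α : ENNReal) * (A.card : ENNReal) := by
  rw [sInf_cutCap_lt_iff]
  constructor
  · rintro ⟨X, hXA, -, hX⟩
    exact ⟨_, cutCap_cutOf_union_neighborsIn_lt G A B α β hdisj hXA hX⟩
  · rintro ⟨T, hT⟩
    exact ⟨A ∩ T, inter_subset_left, ratio_of_cutCap_cutOf_lt G A B α β hT⟩

/-- There is a nonempty `X ⊆ A` with `|X|/|N(X)| > β/α` iff the minimum capacity of an
`s`–`t` cut in the network `D` is strictly less than `α·|A|`. -/
theorem ratio_iff_mincut_lt (G : SimpleGraph V) [DecidableRel G.Adj]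
    (A B : Finset V) (hdisj : Disjoint A B) (hcover : A ∪ B = Finset.univ)
    (hbip : ∀ u v : V, G.Adj u v → (u ∈ A ∧ v ∈ B) ∨ (u ∈ B ∧ v ∈ A))
    (α β : ℕ) (hα : 0 < α) (hβ : 0 < β) :
    (∃ X : Finset V, X ⊆ A ∧ X.Nonempty ∧
        β * (B.filter (fun v => ∃ u ∈ X, G.Adj u v)).card < α * X.card) ↔
      sInf {c : ENNReal | ∃ S : Finset (Unit ⊕ V ⊕ Unit),
          Sum.inl () ∈ S ∧ Sum.inr (Sum.inr ()) ∉ S ∧ c = cutCap G A B α β S} <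
        (α : ENNReal) * (A.card : ENNReal) :=
  ratio_iff_mincut_lt_general G A B hdisj α β
end
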